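/- Let c₀ be the sharp sub-Gaussian comparison constant and let a > √(2 log 2) be the associated parameter with H(a) = B. Define R(u) = Φ̄(u/c₀) / (2·e^{-u²/2}) for u ≥ a. Then R is nondecreasing on [a, ∞). -/

import Mathlib

/-!
Writing `v = u / c₀`, the derivative of `R` has the sign of `c₀² v Φ̄(v) - φ(v)`. The Mills-type
bound `Φ̄(v) ≥ v φ(v) / (1 + v²)` makes this nonnegative as soon as `c₀² + u² ≤ c₀² u²`. That
holds on `[a, ∞)` because `c₀ ≥ B √(2π)` (since `φ ≤ 1/√(2π)`) gives `c₀² ≥ 2.1`, and `H` is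
decreasing with `H(1.4) > 1.02 > B = H(a)`, so `a ≥ 1.4`.
-/

open MeasureTheory Real Set

/-- The standard normal density `φ(x) = (2π)^{-1/2} e^{-x²/2}`. -/
noncomputable def stdNormalPDF (x : ℝ) : ℝ :=
  (Real.sqrt (2 * Real.pi))⁻¹ * Real.exp (-x ^ 2 / 2)

/-- The Gaussian tail `Φ̄(x) = ∫_x^∞ φ(t) dt`. -/
noncomputable def gaussTail (x : ℝ) : ℝ := ∫ t in Set.Ioi x, stdNormalPDF t

/-- `B = t₀/2 + ∫_{t₀}^∞ e^{-t²/2} dt` with `t₀ = √(2 log 2)`. -/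
noncomputable def Bconst : ℝ :=
  Real.sqrt (2 * Real.log 2) / 2 +
    ∫ t in Set.Ioi (Real.sqrt (2 * Real.log 2)), Real.exp (-t ^ 2 / 2)

/-- `H(x) = 2x e^{-x²/2} + 2 ∫_x^∞ e^{-t²/2} dt`. -/
noncomputable def Hfun (x : ℝ) : ℝ :=
  2 * x * Real.exp (-x ^ 2 / 2) + 2 * ∫ t in Set.Ioi x, Real.exp (-t ^ 2 / 2)

open Filter Topology

lemma integrable_exp_neg_sq_div_two : Integrable fun t : ℝ => exp (-t ^ 2 / 2) := by
  convert integrable_exp_neg_mul_sq (by norm_num : (0 : ℝ) < 1 / 2) using 2 with t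
  ring_nf

lemma hasDerivAt_exp_neg_sq_div_two (x : ℝ) :
    HasDerivAt (fun t : ℝ => exp (-t ^ 2 / 2)) (-x * exp (-x ^ 2 / 2)) x := by
  have h : HasDerivAt (fun t : ℝ => -t ^ 2 / 2) (-x) x :=
    ((hasDerivAt_pow 2 x).neg.div_const 2).congr_deriv (by ring)
  exact ((hasDerivAt_exp _).comp x h).congr_deriv (by ring)

lemma tendsto_exp_neg_sq_div_two_atTop :
    Tendsto (fun t : ℝ => exp (-t ^ 2 / 2)) atTop (𝓝 0) := by
  refine tendsto_exp_atBot.comp ?_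
  have h : Tendsto (fun t : ℝ => t ^ 2 / 2) atTop atTop :=
    (tendsto_pow_atTop two_ne_zero).atTop_div_const two_pos
  exact (tendsto_neg_atTop_atBot.comp h).congr fun t => by rw [Function.comp_apply, neg_div]

lemma hasDerivAt_integral_Ioi {g : ℝ → ℝ} (hg : Continuous g) (hgi : Integrable g) (x : ℝ) :
    HasDerivAt (fun y => ∫ t in Ioi y, g t) (-g x) x := by
  have h := ((hg.integral_hasStrictDerivAt 0 x).hasDerivAt).const_sub (∫ t in Ioi (0 : ℝ), g t)
  refine h.congr_of_eventuallyEq (Eventually.of_forall fun y => ?_)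
  simp only [← intervalIntegral.integral_Ioi_sub_Ioi' hgi.integrableOn hgi.integrableOn,
    sub_sub_cancel]

lemma integral_Ioi_mul_exp_neg_sq_div_two {x : ℝ} (hx : 0 ≤ x) :
    ∫ t in Ioi x, t * exp (-t ^ 2 / 2) = exp (-x ^ 2 / 2) := by
  have h := integral_Ioi_of_hasDerivAt_of_nonneg' (g := fun t : ℝ => -exp (-t ^ 2 / 2))
    (fun t _ => (hasDerivAt_exp_neg_sq_div_two t).neg.congr_deriv (by ring))
    (fun t ht => mul_nonneg (hx.trans (le_of_lt ht)) (exp_pos _).le)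
    (by simpa using tendsto_exp_neg_sq_div_two_atTop.neg)
  simpa using h

lemma integral_Ioi_exp_neg_sq_div_two_le {x : ℝ} (hx : 0 < x) :
    ∫ t in Ioi x, exp (-t ^ 2 / 2) ≤ exp (-x ^ 2 / 2) / x := by
  have hint : IntegrableOn (fun t : ℝ => t * exp (-t ^ 2 / 2)) (Ioi x) :=
    integrableOn_Ioi_deriv_of_nonneg' (g := fun t : ℝ => -exp (-t ^ 2 / 2))
      (fun t _ => (hasDerivAt_exp_neg_sq_div_two t).neg.congr_deriv (by ring))
      (fun t ht => mul_nonneg (hx.le.trans (le_of_lt ht)) (exp_pos _).le)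
      (by simpa using tendsto_exp_neg_sq_div_two_atTop.neg)
  calc ∫ t in Ioi x, exp (-t ^ 2 / 2)
      ≤ ∫ t in Ioi x, t * exp (-t ^ 2 / 2) / x := by
        refine setIntegral_mono_on integrable_exp_neg_sq_div_two.integrableOn
          (hint.div_const x) measurableSet_Ioi fun t ht => ?_
        rw [le_div_iff₀ hx]
        exact mul_le_mul_of_nonneg_left (le_of_lt ht) (exp_pos _).le |>.trans_eq (mul_comm _ _)
    _ = exp (-x ^ 2 / 2) / x := by
        rw [integral_div, integral_Ioi_mul_exp_neg_sq_div_two hx.le]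

lemma stdNormalPDF_pos (x : ℝ) : 0 < stdNormalPDF x :=
  mul_pos (inv_pos.2 (sqrt_pos.2 (by positivity))) (exp_pos _)

lemma stdNormalPDF_le (x : ℝ) : stdNormalPDF x ≤ (√(2 * π))⁻¹ :=
  mul_le_of_le_one_right (inv_nonneg.2 (sqrt_nonneg _))
    (exp_le_one_iff.2 (by nlinarith [sq_nonneg x]))

lemma continuous_stdNormalPDF : Continuous stdNormalPDF := by
  unfold stdNormalPDF; fun_prop

lemma integrable_stdNormalPDF : Integrable stdNormalPDF :=
  integrable_exp_neg_sq_div_two.const_mul _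

lemma hasDerivAt_gaussTail (x : ℝ) : HasDerivAt gaussTail (-stdNormalPDF x) x :=
  hasDerivAt_integral_Ioi continuous_stdNormalPDF integrable_stdNormalPDF x

lemma hasDerivAt_stdNormalPDF (x : ℝ) : HasDerivAt stdNormalPDF (-x * stdNormalPDF x) x :=
  ((hasDerivAt_exp_neg_sq_div_two x).const_mul _).congr_deriv (by unfold stdNormalPDF; ring)

lemma tendsto_stdNormalPDF_atTop : Tendsto stdNormalPDF atTop (𝓝 0) := by
  have h := tendsto_exp_neg_sq_div_two_atTop.const_mul (√(2 * π))⁻¹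
  rwa [mul_zero] at h

lemma hasDerivAt_mul_stdNormalPDF_div (x : ℝ) :
    HasDerivAt (fun t => t * stdNormalPDF t / (1 + t ^ 2))
      (stdNormalPDF x * (2 / (1 + x ^ 2) ^ 2) - stdNormalPDF x) x := by
  have hden : HasDerivAt (fun t : ℝ => 1 + t ^ 2) (2 * x) x := by
    simpa using (hasDerivAt_pow 2 x).const_add 1
  refine (((hasDerivAt_id' x).mul (hasDerivAt_stdNormalPDF x)).div hden
    (by positivity)).congr_deriv ?_
  simp only [Pi.mul_apply]
  field_simp
  ring

lemma tendsto_mul_stdNormalPDF_div_atTop :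
    Tendsto (fun t => t * stdNormalPDF t / (1 + t ^ 2)) atTop (𝓝 0) := by
  refine squeeze_zero' ?_ ?_ tendsto_stdNormalPDF_atTop <;>
    filter_upwards [eventually_ge_atTop 0] with t ht
  · exact div_nonneg (mul_nonneg ht (stdNormalPDF_pos t).le) (by positivity)
  · rw [div_le_iff₀ (by positivity)]
    nlinarith [stdNormalPDF_pos t, sq_nonneg (t - 1)]

lemma mul_stdNormalPDF_div_le_gaussTail (v : ℝ) :
    v * stdNormalPDF v / (1 + v ^ 2) ≤ gaussTail v := by
  have hw : Integrable fun t => stdNormalPDF t * (2 / (1 + t ^ 2) ^ 2) :=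
    integrable_stdNormalPDF.mul_bdd (c := 2)
      (continuous_const.div (by fun_prop) fun t => by positivity).aestronglyMeasurable
      (ae_of_all _ fun t => by
        rw [norm_of_nonneg (by positivity), div_le_iff₀ (by positivity)]
        nlinarith [sq_nonneg t, sq_nonneg (t ^ 2)])
  -- `Φ̄(v) - v φ(v) / (1 + v²) = ∫_v^∞ 2 φ(t) / (1 + t²)² dt`
  have hFTC := integral_Ioi_of_hasDerivAt_of_tendsto' (a := v)
    (fun t _ => hasDerivAt_mul_stdNormalPDF_div t)
    (hw.sub integrable_stdNormalPDF).integrableOn tendsto_mul_stdNormalPDF_div_atTop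
  rw [integral_sub hw.integrableOn integrable_stdNormalPDF.integrableOn] at hFTC
  have hw_nonneg : 0 ≤ ∫ t in Ioi v, stdNormalPDF t * (2 / (1 + t ^ 2) ^ 2) :=
    setIntegral_nonneg measurableSet_Ioi fun t _ => mul_nonneg (stdNormalPDF_pos t).le
      (by positivity)
  unfold gaussTail
  linarith

lemma stdNormalPDF_le_mul_gaussTail {k v : ℝ} (hv : 0 ≤ v) (hkv : 1 + v ^ 2 ≤ k * v ^ 2) :
    stdNormalPDF v ≤ k * v * gaussTail v := by
  have hk : 0 ≤ k := by nlinarith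
  calc stdNormalPDF v
      ≤ k * v ^ 2 * stdNormalPDF v / (1 + v ^ 2) := by
        rw [le_div_iff₀ (by positivity)]
        nlinarith [mul_le_mul_of_nonneg_right hkv (stdNormalPDF_pos v).le]
    _ = k * v * (v * stdNormalPDF v / (1 + v ^ 2)) := by ring
    _ ≤ k * v * gaussTail v :=
        mul_le_mul_of_nonneg_left (mul_stdNormalPDF_div_le_gaussTail v) (by positivity)

lemma hasDerivAt_gaussTail_div_mul_exp (c u : ℝ) :
    HasDerivAt (fun u => gaussTail (u / c) * exp (u ^ 2 / 2))
      (exp (u ^ 2 / 2) * (u * gaussTail (u / c) - stdNormalPDF (u / c) / c)) u := by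
  have htail : HasDerivAt (fun u => gaussTail (u / c)) (-stdNormalPDF (u / c) * (1 / c)) u :=
    (hasDerivAt_gaussTail (u / c)).comp (h := fun u => u / c) u ((hasDerivAt_id' u).div_const c)
  have hexp : HasDerivAt (fun u : ℝ => exp (u ^ 2 / 2)) (u * exp (u ^ 2 / 2)) u :=
    ((hasDerivAt_exp _).comp u ((hasDerivAt_pow 2 u).div_const 2)).congr_deriv (by ring)
  exact (htail.mul hexp).congr_deriv (by ring)

lemma monotoneOn_gaussTail_div_mul_exp {a c : ℝ} (ha : 0 < a) (hc : 0 < c)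
    (hac : c ^ 2 + a ^ 2 ≤ c ^ 2 * a ^ 2) :
    MonotoneOn (fun u => gaussTail (u / c) * exp (u ^ 2 / 2)) (Ici a) := by
  refine monotoneOn_of_hasDerivWithinAt_nonneg (convex_Ici a)
    (fun u _ => (hasDerivAt_gaussTail_div_mul_exp c u).continuousAt.continuousWithinAt)
    (fun u _ => (hasDerivAt_gaussTail_div_mul_exp c u).hasDerivWithinAt) fun u hu => ?_
  rw [interior_Ici, mem_Ioi] at hu
  have hv : 0 ≤ u / c := div_nonneg (ha.trans hu).le hc.le
  have hc₁ : 1 < c ^ 2 := by nlinarith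
  have hau : a ^ 2 < u ^ 2 := by nlinarith
  have hcu : c ^ 2 + u ^ 2 ≤ c ^ 2 * u ^ 2 := by
    nlinarith [mul_nonneg (sub_nonneg.2 hc₁.le) (sub_nonneg.2 hau.le)]
  have hcv : 1 + (u / c) ^ 2 ≤ c ^ 2 * (u / c) ^ 2 := by
    calc 1 + (u / c) ^ 2 = (c ^ 2 + u ^ 2) / c ^ 2 := by field_simp
      _ ≤ c ^ 2 * u ^ 2 / c ^ 2 := by gcongr
      _ = c ^ 2 * (u / c) ^ 2 := by field_simp
  have key := stdNormalPDF_le_mul_gaussTail hv hcv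
  have hu_eq : c ^ 2 * (u / c) = c * u := by field_simp
  rw [hu_eq] at key
  refine mul_nonneg (exp_pos _).le (sub_nonneg.2 ?_)
  rw [div_le_iff₀ hc]
  linarith

lemma lt_sqrt_two_mul_log_two : (1.17 : ℝ) < √(2 * log 2) := by
  rw [lt_sqrt (by norm_num)]
  linarith [log_two_gt_d9]

lemma sqrt_two_mul_log_two_lt : √(2 * log 2) < 1.18 := by
  rw [sqrt_lt' (by norm_num)]
  linarith [log_two_lt_d9]

lemma exp_neg_sqrt_two_mul_log_two_sq_div_two : exp (-√(2 * log 2) ^ 2 / 2) = 1 / 2 := by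
  rw [sq_sqrt (by positivity), show -(2 * log 2) / 2 = -log 2 by ring, exp_neg, exp_log two_pos,
    one_div]

lemma lt_Bconst : (0.585 : ℝ) < Bconst := by
  have htail : 0 ≤ ∫ t in Ioi √(2 * log 2), exp (-t ^ 2 / 2) :=
    setIntegral_nonneg measurableSet_Ioi fun t _ => (exp_pos _).le
  unfold Bconst
  linarith [lt_sqrt_two_mul_log_two]

lemma Bconst_lt : Bconst < 1.02 := by
  have ht₀ := lt_sqrt_two_mul_log_two
  have htail := integral_Ioi_exp_neg_sq_div_two_le (x := √(2 * log 2)) (by linarith)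
  rw [exp_neg_sqrt_two_mul_log_two_sq_div_two] at htail
  have hquot : 1 / 2 / √(2 * log 2) < 1 / 2 / 1.17 :=
    div_lt_div_of_pos_left (by norm_num) (by norm_num) ht₀
  unfold Bconst
  linarith [sqrt_two_mul_log_two_lt]

lemma hasDerivAt_Hfun (x : ℝ) : HasDerivAt Hfun (-2 * x ^ 2 * exp (-x ^ 2 / 2)) x := by
  have hprod := ((hasDerivAt_id' x).const_mul 2).mul (hasDerivAt_exp_neg_sq_div_two x)
  have htail := (hasDerivAt_integral_Ioi (by fun_prop) integrable_exp_neg_sq_div_two x).const_mul 2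
  exact (hprod.add htail).congr_deriv (by ring)

lemma strictAntiOn_Hfun : StrictAntiOn Hfun (Ici 0) := by
  refine strictAntiOn_of_deriv_neg (convex_Ici 0)
    (fun x _ => (hasDerivAt_Hfun x).continuousAt.continuousWithinAt) fun x hx => ?_
  rw [interior_Ici, mem_Ioi] at hx
  rw [(hasDerivAt_Hfun x).deriv]
  have := exp_pos (-x ^ 2 / 2)
  have := pow_pos hx 2
  nlinarith

lemma lt_Hfun_seven_fifths : (1.02 : ℝ) < Hfun 1.4 := by
  have htail : 0 ≤ ∫ t in Ioi (1.4 : ℝ), exp (-t ^ 2 / 2) :=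
    setIntegral_nonneg measurableSet_Ioi fun t _ => (exp_pos _).le
  have hexp : (exp 1)⁻¹ ≤ exp (-(1.4 : ℝ) ^ 2 / 2) := by
    rw [← exp_neg, exp_le_exp]
    norm_num
  have he : (2.7182818286 : ℝ)⁻¹ < (exp 1)⁻¹ := inv_strictAnti₀ (exp_pos 1) exp_one_lt_d9
  unfold Hfun
  linarith

lemma seven_fifths_le_of_Hfun_eq_Bconst {a : ℝ} (ha : 0 ≤ a) (h : Hfun a = Bconst) :
    (1.4 : ℝ) ≤ a := by
  by_contra! hlt
  have := strictAntiOn_Hfun (mem_Ici.2 ha) (mem_Ici.2 (by norm_num)) hlt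
  linarith [Bconst_lt, lt_Hfun_seven_fifths]

lemma mul_sqrt_two_pi_le_div_stdNormalPDF {B : ℝ} (hB : 0 ≤ B) (z : ℝ) :
    B * √(2 * π) ≤ B / stdNormalPDF z := by
  rw [le_div_iff₀ (stdNormalPDF_pos z), mul_assoc]
  refine mul_le_of_le_one_right hB ?_
  calc √(2 * π) * stdNormalPDF z ≤ √(2 * π) * (√(2 * π))⁻¹ :=
        mul_le_mul_of_nonneg_left (stdNormalPDF_le z) (sqrt_nonneg _)
    _ = 1 := mul_inv_cancel₀ (by positivity)

theorem stmt10_general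
    (a z c₀ : ℝ)
    (ha : Real.sqrt (2 * Real.log 2) < a) (hHa : Hfun a = Bconst)
    (hc₀ : c₀ = Bconst / stdNormalPDF z) :
    MonotoneOn (fun u : ℝ => gaussTail (u / c₀) / (2 * Real.exp (-u ^ 2 / 2)))
      (Set.Ici a) := by
  have ha₀ : 0 < a := (sqrt_nonneg _).trans_lt ha
  have ha_ge : (1.4 : ℝ) ≤ a := seven_fifths_le_of_Hfun_eq_Bconst ha₀.le hHa
  have hB := lt_Bconst
  have hc₀_ge : Bconst * √(2 * π) ≤ c₀ := hc₀ ▸ mul_sqrt_two_pi_le_div_stdNormalPDF (by linarith) z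
  have hc₀_pos : 0 < c₀ := lt_of_lt_of_le (by positivity) hc₀_ge
  have hc₀_sq : (2.1 : ℝ) ≤ c₀ ^ 2 := by
    have h := pow_le_pow_left₀ (by positivity) hc₀_ge 2
    rw [mul_pow, sq_sqrt (by positivity)] at h
    nlinarith [pi_gt_d2]
  have ha_sq : (1.96 : ℝ) ≤ a ^ 2 := by nlinarith
  have hmono := monotoneOn_gaussTail_div_mul_exp ha₀ hc₀_pos
    (by nlinarith [mul_nonneg (sub_nonneg.2 hc₀_sq) (sub_nonneg.2 ha_sq)])
  have hR : ∀ u : ℝ, gaussTail (u / c₀) / (2 * exp (-u ^ 2 / 2))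
      = gaussTail (u / c₀) * exp (u ^ 2 / 2) / 2 := fun u => by
    rw [neg_div, exp_neg]
    field_simp
  intro x hx y hy hxy
  simp only [hR]
  exact div_le_div_of_nonneg_right (hmono hx hy hxy) zero_le_two

/-- A monotone ratio: with `c₀` the sharp sub-Gaussian comparison constant and `a` the
associated parameter (`a > √(2 log 2)`, `H(a) = B`, `Φ̄(z) = p₀ = 2e^{-a²/2}`,
`c₀ = B/φ(z)`), the function `R(u) = Φ̄(u/c₀)/(2e^{-u²/2})` is nondecreasing on `[a, ∞)`. -/
theorem stmt10
    (a z c₀ : ℝ)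
    (ha : Real.sqrt (2 * Real.log 2) < a) (hHa : Hfun a = Bconst)
    (hz : gaussTail z = 2 * Real.exp (-a ^ 2 / 2))
    (hc₀ : c₀ = Bconst / stdNormalPDF z) :
    MonotoneOn (fun u : ℝ => gaussTail (u / c₀) / (2 * Real.exp (-u ^ 2 / 2)))
      (Set.Ici a) :=
  stmt10_general a z c₀ ha hHa hc₀
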